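/- arXiv:gr-qc/0305085 — 3 statements merged into one kernel-verified Lean document; each statement's English description precedes it below -/
import Mathlib

section
/- Let ∇ be a torsion-free connection on M with ∇u = 0, θ a 1-form with θ(u) = -1, and suppose the spatial part of the symmetric tensor ∇θ - ½dθ vanishes. Then ∇θ - ½dθ = -½(θ ⊗ L_u θ + L_u θ ⊗ θ), where L_u θ is the Lie derivative of θ along u. -/
/-- An axiomatized calculus of vector fields on a manifold: `A` is the algebra of
smooth functions, `V` the `A`-module of vector fields, `act` the action of vector
fields on functions (as derivations), `bracket` the Lie bracket and `conn` a
torsion-free affine connection. -/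
structure VFCalc (A : Type*) (V : Type*) [CommRing A] [AddCommGroup V] [Module A V] where
  act : V → A → A
  bracket : V → V → V
  conn : V → V → V
  act_add : ∀ X f g, act X (f + g) = act X f + act X g
  act_mul : ∀ X f g, act X (f * g) = act X f * g + f * act X g
  act_addl : ∀ X Y f, act (X + Y) f = act X f + act Y f
  act_smull : ∀ (a : A) X f, act (a • X) f = a * act X f
  bracket_self : ∀ X, bracket X X = 0
  bracket_antisymm : ∀ X Y, bracket X Y = -bracket Y X
  bracket_addr : ∀ X Y Z, bracket X (Y + Z) = bracket X Y + bracket X Z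
  bracket_smulr : ∀ X (a : A) Y, bracket X (a • Y) = act X a • Y + a • bracket X Y
  bracket_act : ∀ X Y f, act (bracket X Y) f = act X (act Y f) - act Y (act X f)
  conn_addl : ∀ X Y Z, conn (X + Y) Z = conn X Z + conn Y Z
  conn_smull : ∀ (a : A) X Y, conn (a • X) Y = a • conn X Y
  conn_addr : ∀ X Y Z, conn X (Y + Z) = conn X Y + conn X Z
  conn_smulr : ∀ X (a : A) Y, conn X (a • Y) = act X a • Y + a • conn X Y
  torsion_free : ∀ X Y, conn X Y - conn Y X = bracket X Y

variable {A : Type*} {V : Type*} [CommRing A] [AddCommGroup V] [Module A V]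

/-- Curvature operator `R(X,Y)Z` of the connection. -/
def VFCalc.curv (C : VFCalc A V) (X Y Z : V) : V :=
  C.conn X (C.conn Y Z) - C.conn Y (C.conn X Z) - C.conn (C.bracket X Y) Z

/-- Covariant derivative of a covariant 2-tensor. -/
def VFCalc.cov2 (C : VFCalc A V) (t : V) (g : V → V → A) (v w : V) : A :=
  C.act t (g v w) - g (C.conn t v) w - g v (C.conn t w)

/-- Lie derivative of a covariant 2-tensor. -/
def VFCalc.lie2 (C : VFCalc A V) (u : V) (g : V → V → A) (v w : V) : A :=
  C.act u (g v w) - g (C.bracket u v) w - g v (C.bracket u w)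

/-- Covariant derivative of a 1-form: `(∇_v θ)(w)`. -/
def VFCalc.cov1 (C : VFCalc A V) (v : V) (θ : V → A) (w : V) : A :=
  C.act v (θ w) - θ (C.conn v w)

/-- Lie derivative of a 1-form. -/
def VFCalc.lie1 (C : VFCalc A V) (u : V) (θ : V → A) (w : V) : A :=
  C.act u (θ w) - θ (C.bracket u w)

/-- Exterior derivative of a 1-form. -/
def VFCalc.dform (C : VFCalc A V) (θ : V → A) (v w : V) : A :=
  C.act v (θ w) - C.act w (θ v) - θ (C.bracket v w)

/-- A function-linear 1-form (a tensorial object). -/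
def IsLinForm (θ : V → A) : Prop :=
  (∀ v w : V, θ (v + w) = θ v + θ w) ∧ ∀ (a : A) (v : V), θ (a • v) = a * θ v

/-- A function-bilinear covariant 2-tensor. -/
def IsBilinForm (g : V → V → A) : Prop :=
  (∀ w : V, IsLinForm fun v => g v w) ∧ ∀ v : V, IsLinForm (g v)

set_option linter.unusedSectionVars false


lemma VFCalc.act_zero' (C : VFCalc A V) (X : V) : C.act X 0 = 0 := by
  have h := C.act_add X 0 0
  rw [add_zero] at h
  exact left_eq_add.mp h

lemma VFCalc.act_one' (C : VFCalc A V) (X : V) : C.act X 1 = 0 := by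
  have h := C.act_mul X 1 1
  simp only [mul_one, one_mul] at h
  exact left_eq_add.mp h

lemma VFCalc.act_neg_one' (C : VFCalc A V) (X : V) : C.act X (-1) = 0 := by
  have h := C.act_add X 1 (-1)
  rw [add_neg_cancel, C.act_zero', C.act_one'] at h
  simpa using h.symm

section LinForm
variable {θ : V → A} (hθ : IsLinForm θ)
include hθ

lemma linform_zero : θ 0 = 0 := by
  have := hθ.2 0 0
  simpa using this

lemma linform_neg (x : V) : θ (-x) = -θ x := by
  have := hθ.2 (-1) x
  simpa using this

lemma linform_sub (x y : V) : θ (x - y) = θ x - θ y := by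
  rw [sub_eq_add_neg, hθ.1, linform_neg hθ, ← sub_eq_add_neg]

end LinForm

section Tensorial
variable (C : VFCalc A V) {θ : V → A} (hθ : IsLinForm θ)
include hθ

lemma cov1_addl (v v' w : V) : C.cov1 (v + v') θ w = C.cov1 v θ w + C.cov1 v' θ w := by
  simp only [VFCalc.cov1, C.act_addl, C.conn_addl, hθ.1]; ring

lemma cov1_smull (a : A) (v w : V) : C.cov1 (a • v) θ w = a * C.cov1 v θ w := by
  simp only [VFCalc.cov1, C.act_smull, C.conn_smull, hθ.2]; ring

lemma cov1_addr (v w w' : V) : C.cov1 v θ (w + w') = C.cov1 v θ w + C.cov1 v θ w' := by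
  simp only [VFCalc.cov1, hθ.1, C.act_add, C.conn_addr]; ring

lemma cov1_smulr (v : V) (a : A) (w : V) : C.cov1 v θ (a • w) = a * C.cov1 v θ w := by
  simp only [VFCalc.cov1, hθ.2, C.act_mul, C.conn_smulr, hθ.1]; ring

lemma dform_antisymm (v w : V) : C.dform θ v w = -C.dform θ w v := by
  simp only [VFCalc.dform, C.bracket_antisymm v w, linform_neg hθ]; ring

lemma dform_addl (v v' w : V) :
    C.dform θ (v + v') w = C.dform θ v w + C.dform θ v' w := by
  have hb : C.bracket (v + v') w = C.bracket v w + C.bracket v' w := by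
    rw [C.bracket_antisymm, C.bracket_addr, C.bracket_antisymm w v,
      C.bracket_antisymm w v']
    abel
  simp only [VFCalc.dform, C.act_addl, hθ.1, C.act_add, hb]; ring

lemma dform_smull (a : A) (v w : V) : C.dform θ (a • v) w = a * C.dform θ v w := by
  have hb : C.bracket (a • v) w = -(C.act w a • v) + a • C.bracket v w := by
    rw [C.bracket_antisymm, C.bracket_smulr, C.bracket_antisymm w v]
    simp [smul_neg]
    abel
  simp only [VFCalc.dform, C.act_smull, hθ.2, C.act_mul, hθ.1, linform_neg hθ, hb]
  ring

lemma dform_addr (v w w' : V) :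
    C.dform θ v (w + w') = C.dform θ v w + C.dform θ v w' := by
  rw [dform_antisymm C hθ, dform_addl C hθ, dform_antisymm C hθ w v,
    dform_antisymm C hθ w' v]; ring

lemma dform_smulr (v : V) (a : A) (w : V) : C.dform θ v (a • w) = a * C.dform θ v w := by
  rw [dform_antisymm C hθ, dform_smull C hθ, dform_antisymm C hθ w v]; ring

end Tensorial

section Sform
variable [Algebra ℝ A]

/-- The tensor `∇θ - ½ dθ`. -/
noncomputable def Sform (C : VFCalc A V) (θ : V → A) (v w : V) : A :=
  C.cov1 v θ w - ((1 : ℝ) / 2) • C.dform θ v w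

variable (C : VFCalc A V) {θ : V → A} (hθ : IsLinForm θ)

lemma half_add_half (x : A) : ((1 : ℝ) / 2) • x + ((1 : ℝ) / 2) • x = x := by
  rw [← add_smul]; norm_num

include hθ

lemma Sform_symm (v w : V) : Sform C θ v w = Sform C θ w v := by
  have hc : C.cov1 v θ w - C.cov1 w θ v = C.dform θ v w := by
    simp only [VFCalc.cov1, VFCalc.dform, ← C.torsion_free v w, linform_sub hθ]
    ring
  have hd := dform_antisymm C hθ v w
  have key : Sform C θ v w - Sform C θ w v =
      C.dform θ v w - (((1 : ℝ) / 2) • C.dform θ v w + ((1 : ℝ) / 2) • C.dform θ v w) := by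
    simp only [Sform]
    rw [hd]
    rw [show C.cov1 v θ w - ((1:ℝ)/2) • -C.dform θ w v -
        (C.cov1 w θ v - ((1:ℝ)/2) • C.dform θ w v) =
        (C.cov1 v θ w - C.cov1 w θ v) - (((1:ℝ)/2) • -C.dform θ w v -
          ((1:ℝ)/2) • C.dform θ w v) by ring, hc]
    rw [hd]
    simp only [smul_neg]
    ring
  rw [half_add_half] at key
  have h0 : Sform C θ v w - Sform C θ w v = 0 := by rw [key]; ring
  exact sub_eq_zero.mp h0

lemma Sform_addl (v v' w : V) :
    Sform C θ (v + v') w = Sform C θ v w + Sform C θ v' w := by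
  simp only [Sform, cov1_addl C hθ, dform_addl C hθ, smul_add]; ring

lemma Sform_smull (a : A) (v w : V) : Sform C θ (a • v) w = a * Sform C θ v w := by
  simp only [Sform, cov1_smull C hθ, dform_smull C hθ, mul_sub, mul_smul_comm]

lemma Sform_addr (v w w' : V) :
    Sform C θ v (w + w') = Sform C θ v w + Sform C θ v w' := by
  simp only [Sform, cov1_addr C hθ, dform_addr C hθ, smul_add]; ring

lemma Sform_smulr (v : V) (a : A) (w : V) : Sform C θ v (a • w) = a * Sform C θ v w := by
  simp only [Sform, cov1_smulr C hθ, dform_smulr C hθ, mul_sub, mul_smul_comm]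

end Sform

section Main
variable [Algebra ℝ A] (C : VFCalc A V) (u : V) {θ : V → A}
variable (hpar : ∀ v : V, C.conn v u = 0) (hθ : IsLinForm θ) (hθu : θ u = -1)

include hpar hθ hθu in
lemma Sform_u_right (w : V) : Sform C θ u w = ((1 : ℝ) / 2) • C.lie1 u θ w := by
  have hconn : C.conn u w = C.bracket u w := by
    have h := C.torsion_free u w
    rw [hpar w, sub_zero] at h
    exact h
  have hcov : C.cov1 u θ w = C.lie1 u θ w := by
    simp only [VFCalc.cov1, VFCalc.lie1, hconn]
  have hdf : C.dform θ u w = C.lie1 u θ w := by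
    simp only [VFCalc.dform, VFCalc.lie1, hθu, C.act_neg_one', sub_zero]
  rw [Sform, hcov, hdf]
  have := half_add_half (C.lie1 u θ w)
  nth_rewrite 1 [← this]
  ring

include hθ hθu in
lemma lie1_u_u : C.lie1 u θ u = 0 := by
  simp only [VFCalc.lie1, hθu, C.act_neg_one', C.bracket_self, linform_zero hθ, sub_zero]

end Main


/-- if the spatial part of the symmetric tensor ∇θ - ½dθ vanishes, then
∇θ - ½dθ = -½(θ ⊗ L_u θ + L_u θ ⊗ θ). -/
theorem conn_theta_formula [Algebra ℝ A] (C : VFCalc A V) (u : V)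
    (hpar : ∀ v : V, C.conn v u = 0)
    (θ : V → A) (hθ : IsLinForm θ) (hθu : θ u = -1)
    (hperp : ∀ v w : V, θ v = 0 → θ w = 0 →
      C.cov1 v θ w - ((1 : ℝ) / 2) • C.dform θ v w = 0) :
    ∀ v w : V,
      C.cov1 v θ w - ((1 : ℝ) / 2) • C.dform θ v w =
        -(((1 : ℝ) / 2) • (θ v * C.lie1 u θ w + C.lie1 u θ v * θ w)) := by
  intro v w
  set a := θ v with ha
  set b := θ w with hb
  have hv' : θ (v + a • u) = 0 := by rw [hθ.1, hθ.2, hθu]; ring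
  have hw' : θ (w + b • u) = 0 := by rw [hθ.1, hθ.2, hθu]; ring
  have hS0 : Sform C θ (v + a • u) (w + b • u) = 0 := hperp _ _ hv' hw'
  have hSur : ∀ x : V, Sform C θ u x = ((1 : ℝ) / 2) • C.lie1 u θ x :=
    fun x => Sform_u_right C u hpar hθ hθu x
  have hSuu : Sform C θ u u = 0 := by
    rw [hSur u, lie1_u_u C u hθ hθu, smul_zero]
  have hexp : Sform C θ (v + a • u) (w + b • u) =
      Sform C θ v w + b * Sform C θ v u + a * Sform C θ u w
        + a * (b * Sform C θ u u) := by
    rw [Sform_addl C hθ, Sform_addr C hθ, Sform_addr C hθ,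
      Sform_smulr C hθ, Sform_smulr C hθ, Sform_smull C hθ, Sform_smull C hθ]
    ring
  rw [hS0, hSuu] at hexp
  have hSvu : Sform C θ v u = ((1 : ℝ) / 2) • C.lie1 u θ v := by
    rw [Sform_symm C hθ, hSur v]
  have hfin : Sform C θ v w =
      -(b * (((1 : ℝ) / 2) • C.lie1 u θ v) + a * (((1 : ℝ) / 2) • C.lie1 u θ w)) := by
    have := hexp.symm
    rw [hSvu, hSur w] at this
    linear_combination this
  show Sform C θ v w = _
  rw [hfin]
  simp only [mul_smul_comm, smul_add]
  ring
end

section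
/- Let ∇̄ be a torsion-free connection on M with ∇̄u = 0, θ a 1-form with θ(u) = -1, ḡ a symmetric 2-tensor with ḡ(u,·) = 0, and suppose the spatial part of ∇̄ḡ vanishes, i.e. (∇̄_T ḡ)(V,W) = 0 whenever T, V, W are spatial. Setting S := L_u ḡ, then for all vector fields t, v, w: (∇̄_t ḡ)(v,w) = -θ(t)·S(v,w). -/
variable {A : Type*} {V : Type*} [CommRing A] [AddCommGroup V] [Module A V]

/-- for the frame connexion, (∇̄_t ḡ)(v,w) = -θ(t)·S(v,w) with S = L_u ḡ. -/
theorem cov_deriv_spatial_metric_formula (C : VFCalc A V) (u : V)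
    (hpar : ∀ v : V, C.conn v u = 0)
    (θ : V → A) (hθ : IsLinForm θ) (hθu : θ u = -1)
    (g : V → V → A) (hg : IsBilinForm g) (hsym : ∀ v w : V, g v w = g w v)
    (hgu : ∀ v : V, g u v = 0)
    (hperp : ∀ t v w : V, θ t = 0 → θ v = 0 → θ w = 0 → C.cov2 t g v w = 0) :
    ∀ t v w : V, C.cov2 t g v w = -(θ t) * C.lie2 u g v w := by
  obtain ⟨θadd, θsmul⟩ := hθ
  obtain ⟨hgL, hgR⟩ := hg
  -- g vanishes on 0 and on u in either slot
  have g0r : ∀ v : V, g v (0 : V) = 0 := by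
    intro v
    have h := (hgR v).2 0 0
    simpa using h
  have gvu : ∀ v : V, g v u = 0 := fun v => (hsym v u).trans (hgu v)
  have gaddL : ∀ v₁ v₂ w : V, g (v₁ + v₂) w = g v₁ w + g v₂ w := fun v₁ v₂ w => (hgL w).1 v₁ v₂
  have gsmulL : ∀ (a : A) (v w : V), g (a • v) w = a * g v w := fun a v w => (hgL w).2 a v
  have gaddR : ∀ v w₁ w₂ : V, g v (w₁ + w₂) = g v w₁ + g v w₂ := fun v w₁ w₂ => (hgR v).1 w₁ w₂
  have gsmulR : ∀ (a : A) (v w : V), g v (a • w) = a * g v w := fun a v w => (hgR v).2 a w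
  have g0l : ∀ w : V, g (0 : V) w = 0 := fun w => (hsym 0 w).trans (g0r w)
  -- linearity lemmas for cov2
  have covT_add : ∀ t₁ t₂ v w : V,
      C.cov2 (t₁ + t₂) g v w = C.cov2 t₁ g v w + C.cov2 t₂ g v w := by
    intro t₁ t₂ v w
    simp only [VFCalc.cov2, C.act_addl, C.conn_addl, gaddL, gaddR]
    ring
  have covT_smul : ∀ (a : A) (t v w : V),
      C.cov2 (a • t) g v w = a * C.cov2 t g v w := by
    intro a t v w
    simp only [VFCalc.cov2, C.act_smull, C.conn_smull, gsmulL, gsmulR]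
    ring
  have covV_add : ∀ t v₁ v₂ w : V,
      C.cov2 t g (v₁ + v₂) w = C.cov2 t g v₁ w + C.cov2 t g v₂ w := by
    intro t v₁ v₂ w
    simp only [VFCalc.cov2, gaddL, C.act_add, C.conn_addr, gaddR]
    ring
  have covV_smul : ∀ (a : A) (t v w : V),
      C.cov2 t g (a • v) w = a * C.cov2 t g v w := by
    intro a t v w
    simp only [VFCalc.cov2, gsmulL, C.act_mul, C.conn_smulr, gaddL, gsmulL, gsmulR]
    ring
  have covW_add : ∀ t v w₁ w₂ : V,
      C.cov2 t g v (w₁ + w₂) = C.cov2 t g v w₁ + C.cov2 t g v w₂ := by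
    intro t v w₁ w₂
    simp only [VFCalc.cov2, gaddR, C.act_add, C.conn_addr, gaddL]
    ring
  have covW_smul : ∀ (a : A) (t v w : V),
      C.cov2 t g v (a • w) = a * C.cov2 t g v w := by
    intro a t v w
    simp only [VFCalc.cov2, gsmulR, C.act_mul, C.conn_smulr, gaddR, gsmulL]
    ring
  -- cov2 vanishes when u is in the second or third slot
  have covU2 : ∀ t w : V, C.cov2 t g u w = 0 := by
    intro t w
    simp only [VFCalc.cov2, hgu, hpar, gvu, g0r, g0l]
    have : C.act t (0 : A) = 0 := by
      have h := C.act_add t 0 0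
      simpa using h
    simp [this]
  have covU3 : ∀ t v : V, C.cov2 t g v u = 0 := by
    intro t v
    simp only [VFCalc.cov2, gvu, hpar, hgu, g0r, g0l]
    have : C.act t (0 : A) = 0 := by
      have h := C.act_add t 0 0
      simpa using h
    simp [this]
  -- cov2 along u equals lie2 along u
  have covu_eq_lie : ∀ v w : V, C.cov2 u g v w = C.lie2 u g v w := by
    intro v w
    have hcv : C.conn u v = C.bracket u v := by
      have h := C.torsion_free u v
      rw [hpar v] at h
      simpa using h
    have hcw : C.conn u w = C.bracket u w := by
      have h := C.torsion_free u w
      rw [hpar w] at h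
      simpa using h
    simp [VFCalc.cov2, VFCalc.lie2, hcv, hcw]
  -- spatial projections
  intro t v w
  have hθP : ∀ x : V, θ (x + θ x • u) = 0 := by
    intro x
    rw [θadd, θsmul, hθu]; ring
  -- reduce second slot
  have hv : C.cov2 t g v w = C.cov2 t g (v + θ v • u) w := by
    rw [covV_add, covV_smul, covU2]; ring
  have hw : ∀ v' : V, C.cov2 t g v' w = C.cov2 t g v' (w + θ w • u) := by
    intro v'
    rw [covW_add, covW_smul, covU3]; ring
  have ht : ∀ v' w' : V,
      C.cov2 t g v' w' = C.cov2 (t + θ t • u) g v' w' - θ t * C.cov2 u g v' w' := by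
    intro v' w'
    rw [covT_add, covT_smul]; ring
  have hvu : C.cov2 u g (v + θ v • u) (w + θ w • u) = C.cov2 u g v w := by
    rw [covV_add, covV_smul, covU2, covW_add, covW_smul, covU3]; ring
  calc C.cov2 t g v w
      = C.cov2 t g (v + θ v • u) (w + θ w • u) := by rw [hv, hw]
    _ = C.cov2 (t + θ t • u) g (v + θ v • u) (w + θ w • u)
          - θ t * C.cov2 u g (v + θ v • u) (w + θ w • u) := ht _ _
    _ = 0 - θ t * C.cov2 u g v w := by
          rw [hperp _ _ _ (hθP t) (hθP v) (hθP w), hvu]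
    _ = -(θ t) * C.lie2 u g v w := by rw [covu_eq_lie]; ring
end

section
/- Let ∇̄ be a torsion-free connection on M with ∇̄u = 0, θ a 1-form with θ(u) = -1, and ḡ a symmetric 2-tensor satisfying (∇̄_t ḡ)(v,w) = -θ(t)·S(v,w) where S = L_u ḡ. Define the covariant curvature K̄(t,z,v,w) := ḡ(t, R̄(v,w)z). Then K̄(t,z,v,w) + K̄(z,t,v,w) = dθ(v,w)·S(t,z) + θ(w)·(∇̄_v S)(t,z) - θ(v)·(∇̄_w S)(t,z). -/
variable {A : Type*} {V : Type*} [CommRing A] [AddCommGroup V] [Module A V]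

/-- failure of antisymmetry of the covariant curvature K̄ in the first
pair of arguments, measured by S = L_u ḡ. -/
theorem covariant_curvature_first_pair_symmetry (C : VFCalc A V) (u : V)
    (hpar : ∀ v : V, C.conn v u = 0)
    (θ : V → A) (hθ : IsLinForm θ) (hθu : θ u = -1)
    (g : V → V → A) (hg : IsBilinForm g) (hsym : ∀ v w : V, g v w = g w v)
    (hlaw : ∀ t v w : V, C.cov2 t g v w = -(θ t) * C.lie2 u g v w) :
    ∀ t z v w : V,
      g t (C.curv v w z) + g z (C.curv v w t) =
        C.dform θ v w * C.lie2 u g t z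
          + θ w * C.cov2 v (C.lie2 u g) t z
          - θ v * C.cov2 w (C.lie2 u g) t z := by
  intro t z v w
  set S : V → V → A := C.lie2 u g with hS
  -- derived act linearity
  have act0 : ∀ X : V, C.act X 0 = 0 := by
    intro X
    have h := C.act_add X 0 0
    simpa using h
  have actneg : ∀ X f, C.act X (-f) = -C.act X f := by
    intro X f
    have h := C.act_add X f (-f)
    simp [act0] at h
    linear_combination -h
  have actsub : ∀ X f g', C.act X (f - g') = C.act X f - C.act X g' := by
    intro X f g'
    rw [sub_eq_add_neg, C.act_add, actneg, sub_eq_add_neg]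
  -- g linearity in each slot
  have gneg_r : ∀ a y : V, g a (-y) = -g a y := by
    intro a y
    have h := (hg.2 a).2 (-1 : A) y
    rw [neg_one_smul] at h
    linear_combination h
  have gsub_r : ∀ (a x y : V), g a (x - y) = g a x - g a y := by
    intro a x y
    rw [sub_eq_add_neg, (hg.2 a).1, gneg_r, sub_eq_add_neg]
  have gneg_l : ∀ (y a : V), g (-y) a = -g y a := by
    intro y a
    have h := (hg.1 a).2 (-1 : A) y
    rw [neg_one_smul] at h
    linear_combination h
  have gsub_l : ∀ (x y a : V), g (x - y) a = g x a - g y a := by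
    intro x y a
    have h1 : g (x + -y) a = g x a + g (-y) a := (hg.1 a).1 x (-y)
    rw [sub_eq_add_neg, h1, gneg_l, sub_eq_add_neg]
  -- the key consequence of hlaw
  have L : ∀ a b c : V, C.act a (g b c)
      = g (C.conn a b) c + g b (C.conn a c) - θ a * S b c := by
    intro a b c
    have h := hlaw a b c
    rw [VFCalc.cov2] at h
    linear_combination h
  -- split the curvature terms using linearity
  have hA : g t (C.curv v w z)
      = g t (C.conn v (C.conn w z)) - g t (C.conn w (C.conn v z))
        - g t (C.conn (C.bracket v w) z) := by
    rw [VFCalc.curv, gsub_r, gsub_r]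
  have hB : g (C.curv v w t) z
      = g (C.conn v (C.conn w t)) z - g (C.conn w (C.conn v t)) z
        - g (C.conn (C.bracket v w) t) z := by
    rw [VFCalc.curv, gsub_l, gsub_l]
  have h0 : g z (C.curv v w t) = g (C.curv v w t) z := hsym z _
  -- instances of L
  have L1 := L v t (C.conn w z)
  have L2 := L w t (C.conn v z)
  have L3 := L (C.bracket v w) t z
  have L4 := L v (C.conn w t) z
  have L5 := L w (C.conn v t) z
  have L6 := L w t z
  have L7 := L v t z
  have VI := C.bracket_act v w (g t z)
  -- push act v / act w through the expansions of g t (conn w z), g t (conn v z)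
  have e6 : g t (C.conn w z) = C.act w (g t z) - g (C.conn w t) z + θ w * S t z := by
    linear_combination -L6
  have e7 : g t (C.conn v z) = C.act v (g t z) - g (C.conn v t) z + θ v * S t z := by
    linear_combination -L7
  have A1 : C.act v (g t (C.conn w z))
      = C.act v (C.act w (g t z)) - C.act v (g (C.conn w t) z)
        + C.act v (θ w) * S t z + θ w * C.act v (S t z) := by
    have h := congrArg (C.act v) e6
    rw [C.act_add, actsub, C.act_mul] at h
    linear_combination h
  have A2 : C.act w (g t (C.conn v z))
      = C.act w (C.act v (g t z)) - C.act w (g (C.conn v t) z)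
        + C.act w (θ v) * S t z + θ v * C.act w (S t z) := by
    have h := congrArg (C.act w) e7
    rw [C.act_add, actsub, C.act_mul] at h
    linear_combination h
  rw [h0, hA, hB, VFCalc.dform, VFCalc.cov2, VFCalc.cov2]
  linear_combination (-L1) + L2 + L3 + A1 - A2 - VI - L4 + L5
end
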